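/- Let R be a finite chain ring, let C ⊆ M_{n,m}(R) be a code (a free R-submodule), and let U ⊆ R^n be a free R-submodule of rank n − u. Then |C ∩ Mat_U(n×m, R)| · |R|^{m·u} = |C| · |C^⊥ ∩ Mat_{U^⊥}(n×m, R)|. -/

import Mathlib

open Matrix

/-- The orthogonal complement `U^⊥` of a submodule `U ⊆ R^n` with respect to the standard
dot product. -/
def perp {R : Type*} [CommRing R] {n : ℕ} (U : Submodule R (Fin n → R)) :
    Submodule R (Fin n → R) where
  carrier := {v | ∀ u ∈ U, u ⬝ᵥ v = 0}
  add_mem' := by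
    intro x y hx hy u hu
    simp [dotProduct_add, hx u hu, hy u hu]
  zero_mem' := by
    intro u hu
    simp
  smul_mem' := by
    intro c x hx u hu
    simp [dotProduct_smul, hx u hu]

/-- `Mat_U(n×m, R)`: the submodule of `n × m` matrices all of whose columns lie in the
submodule `U ⊆ R^n`, i.e. whose column space `CS(X)` is contained in `U`. -/
def matColIn {R : Type*} [CommRing R] (n m : ℕ) (U : Submodule R (Fin n → R)) :
    Submodule R (Matrix (Fin n) (Fin m) R) where
  carrier := {X | ∀ j, Xᵀ j ∈ U}
  add_mem' := fun hX hY j => U.add_mem (hX j) (hY j)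
  zero_mem' := fun _ => U.zero_mem
  smul_mem' := fun c _ hX j => U.smul_mem c (hX j)

/-- The dual code `C^⊥` of `C ⊆ M_{n,m}(R)` with respect to the trace bilinear form
`b(X,Y) = Tr(XYᵀ)`. -/
def dualCode {R : Type*} [CommRing R] {n m : ℕ}
    (C : Submodule R (Matrix (Fin n) (Fin m) R)) :
    Submodule R (Matrix (Fin n) (Fin m) R) where
  carrier := {Y | ∀ X ∈ C, Matrix.trace (X * Yᵀ) = 0}
  add_mem' := by
    intro Y Z hY hZ X hX
    simp [Matrix.transpose_add, Matrix.mul_add, hY X hX, hZ X hX]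
  zero_mem' := by
    intro X hX
    simp
  smul_mem' := by
    intro c Y hY X hX
    simp [Matrix.transpose_smul, Matrix.mul_smul, hY X hX]


set_option linter.unusedSectionVars false
set_option linter.unusedVariables false
set_option maxHeartbeats 1000000
set_option synthInstance.maxHeartbeats 400000

section chainAux
open IsLocalRing
variable {R : Type*} [CommRing R] [Finite R] [IsLocalRing R]



lemma aux_pi_nilpotent {π : R} (hπ : π ∈ maximalIdeal R) : ∃ N, π ^ N = 0 := by
  have hnu : ¬ IsUnit π := (mem_maximalIdeal π).mp hπ
  obtain ⟨a, b, hab, h⟩ : ∃ a b : ℕ, a < b ∧ π ^ a = π ^ b := by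
    obtain ⟨a, b, hab, h⟩ := Finite.exists_ne_map_eq_of_infinite (fun k : ℕ => π ^ k)
    rcases lt_or_gt_of_ne hab with h' | h'
    · exact ⟨a, b, h', h⟩
    · exact ⟨b, a, h', h.symm⟩
  have ha : 1 ≤ a := by
    by_contra h0
    have ha0 : a = 0 := by omega
    subst ha0
    refine hnu (IsUnit.of_mul_eq_one (π ^ (b - 1)) ?_)
    rw [← pow_succ']
    have hb1 : b - 1 + 1 = b := by omega
    rw [hb1, ← h, pow_zero]
  have key : ∀ k : ℕ, π ^ a = π ^ a * π ^ (k * (b - a)) := by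
    intro k
    induction k with
    | zero => simp
    | succ k ih =>
      have : (k + 1) * (b - a) = (b - a) + k * (b - a) := by ring
      rw [this, pow_add, ← mul_assoc, ← pow_add]
      have hba : a + (b - a) = b := by omega
      rw [hba, ← h]
      exact ih
  set N := a * (b - a) with hN
  have hNa : a ≤ N := by
    have h1 : 1 ≤ b - a := by omega
    calc a = a * 1 := (mul_one a).symm
    _ ≤ a * (b - a) := Nat.mul_le_mul_left a h1
  have hN1 : 1 ≤ N := by
    have h1 : 1 ≤ b - a := by omega
    calc 1 = 1 * 1 := rfl
    _ ≤ a * (b - a) := Nat.mul_le_mul ha h1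
  have keyN : π ^ a * π ^ N = π ^ a := (key a).symm
  clear_value N
  have hidem : π ^ N * π ^ N = π ^ N := by
    have e1 : N + N = (N - a) + (a + N) := by omega
    calc π ^ N * π ^ N = π ^ (N + N) := (pow_add π N N).symm
    _ = π ^ (N - a) * (π ^ a * π ^ N) := by rw [e1, pow_add, pow_add]
    _ = π ^ (N - a) * π ^ a := by rw [keyN]
    _ = π ^ N := by rw [← pow_add]; congr 1; omega
  have hNmem : π ^ N ∈ maximalIdeal R := by
    have : π ^ N = π ^ (N - 1) * π := by rw [← pow_succ]; congr 1; omega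
    rw [this]
    exact Ideal.mul_mem_left _ _ hπ
  have hu : IsUnit (1 - π ^ N) := by
    by_contra h1
    have : (1 : R) - π ^ N ∈ maximalIdeal R := (mem_maximalIdeal _).mpr h1
    have : (1 : R) ∈ maximalIdeal R := by
      have := (maximalIdeal R).add_mem this hNmem
      simpa using this
    exact (maximalIdeal.isMaximal R).ne_top ((Ideal.eq_top_iff_one _).mpr this)
  refine ⟨N, ?_⟩
  obtain ⟨v, hv⟩ := hu.exists_left_inv
  have hz : π ^ N * (1 - π ^ N) = 0 := by rw [mul_sub, mul_one, hidem, sub_self]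
  calc π ^ N = (v * (1 - π ^ N)) * π ^ N := by rw [hv, one_mul]
  _ = v * (π ^ N * (1 - π ^ N)) := by ring
  _ = 0 := by rw [hz, mul_zero]



lemma aux_exists_mul {π : R} (hspan : maximalIdeal R = Ideal.span {π})
    {e : ℕ} (he : π ^ e = 0) (hemin : ∀ i < e, π ^ i ≠ 0)
    {x : R} (hx : x ≠ 0) : ∃ y : R, x * y = π ^ (e - 1) := by
  have hQ : ∃ i : ℕ, ¬ ∃ c : R, x = π ^ i * c := by
    refine ⟨e, ?_⟩
    rintro ⟨c, rfl⟩
    exact hx (by rw [he, zero_mul])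
  classical
  set j := Nat.find hQ with hj
  have hj1 : 1 ≤ j := by
    by_contra h0
    have h2 := Nat.find_spec hQ
    rw [← hj] at h2
    have hj0 : j = 0 := by omega
    rw [hj0] at h2
    exact h2 ⟨x, by simp⟩
  set i := j - 1 with hi
  have hQi : ∃ c : R, x = π ^ i * c := by
    by_contra hc
    have : j ≤ i := Nat.find_le hc
    omega
  obtain ⟨c, hc⟩ := hQi
  have hcu : IsUnit c := by
    by_contra hcu
    have hcm : c ∈ maximalIdeal R := (mem_maximalIdeal c).mpr hcu
    rw [hspan, Ideal.mem_span_singleton'] at hcm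
    obtain ⟨d, hd⟩ := hcm
    have h1 : ∃ c' : R, x = π ^ (i + 1) * c' := ⟨d, by rw [hc, ← hd, pow_succ]; ring⟩
    have h2 := Nat.find_spec hQ
    rw [← hj] at h2
    have hji : j = i + 1 := by omega
    rw [hji] at h2
    exact h2 h1
  have hie : i < e := by
    by_contra hie
    push_neg at hie
    have : π ^ i = 0 := by
      have : π ^ i = π ^ e * π ^ (i - e) := by rw [← pow_add]; congr 1; omega
      rw [this, he, zero_mul]
    exact hx (by rw [hc, this, zero_mul])
  obtain ⟨cu, hcu'⟩ := hcu.exists_right_inv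
  refine ⟨cu * π ^ (e - 1 - i), ?_⟩
  calc x * (cu * π ^ (e - 1 - i)) = π ^ i * (c * cu) * π ^ (e - 1 - i) := by rw [hc]; ring
  _ = π ^ i * π ^ (e - 1 - i) := by rw [hcu', mul_one]
  _ = π ^ (e - 1) := by rw [← pow_add]; congr 1; omega

end chainAux

section keyAux
variable {R : Type*} [CommRing R] [Finite R]

variable {R : Type*} [CommRing R] [Finite R]

lemma aux_key_card {M : Type*} [AddCommGroup M] [Module R M] [Finite M]
    (ψ : AddChar R ℂ) (hψ : ∀ x : R, x ≠ 0 → ∃ r : R, ψ (r * x) ≠ 1)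
    (B : M → M → R)
    (hadd : ∀ x y z : M, B (x + y) z = B x z + B y z)
    (hadd' : ∀ x y z : M, B x (y + z) = B x y + B x z)
    (hsmul : ∀ (r : R) (x y : M), B (r • x) y = r * B x y)
    (hsmul' : ∀ (r : R) (x y : M), B x (r • y) = r * B x y)
    (hnd : ∀ x : M, x ≠ 0 → ∃ y : M, B x y ≠ 0)
    (V P : Submodule R M)
    (hP : ∀ w : M, w ∈ P ↔ ∀ v ∈ V, B v w = 0) :
    Nat.card ↥V * Nat.card ↥P = Nat.card M := by
  classical
  have : Fintype M := Fintype.ofFinite M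
  have hB0 : ∀ y : M, B 0 y = 0 := by
    intro y
    have h := hadd 0 0 y
    rw [add_zero] at h
    exact (left_eq_add.mp h)
  have hB0' : ∀ x : M, B x 0 = 0 := by
    intro x
    have h := hadd' x 0 0
    rw [add_zero] at h
    exact (left_eq_add.mp h)
  have inner1 : ∀ v : M, v ≠ 0 → ∑ w : M, ψ (B v w) = 0 := by
    intro v hv
    let χ : AddChar M ℂ :=
      { toFun := fun w => ψ (B v w)
        map_zero_eq_one' := by simp only [hB0' v]; exact ψ.map_zero_eq_one
        map_add_eq_mul' := by intro a b; simp only [hadd']; exact ψ.map_add_eq_mul _ _ }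
    have hχ : χ ≠ 1 := by
      rw [AddChar.ne_one_iff]
      obtain ⟨y, hy⟩ := hnd v hv
      obtain ⟨r, hr⟩ := hψ _ hy
      exact ⟨r • y, by simpa [χ, hsmul'] using hr⟩
    exact AddChar.sum_eq_zero_of_ne_one hχ
  have step1 : ∑ v : V, ∑ w : M, ψ (B (v : M) w) = (Fintype.card M : ℂ) := by
    have h0 : ∑ w : M, ψ (B ((0 : V) : M) w) = (Fintype.card M : ℂ) := by
      simp only [Submodule.coe_zero, hB0]
      simp [ψ.map_zero_eq_one]
    rw [Finset.sum_eq_single (0 : V)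
      (fun b _ hb => inner1 b (by simpa using hb))
      (fun h => absurd (Finset.mem_univ _) h)]
    exact h0
  have inner2 : ∀ w : M, w ∉ P → ∑ v : V, ψ (B (v : M) w) = 0 := by
    intro w hw
    let χ : AddChar V ℂ :=
      { toFun := fun v => ψ (B (v : M) w)
        map_zero_eq_one' := by simp only [Submodule.coe_zero, hB0]; exact ψ.map_zero_eq_one
        map_add_eq_mul' := by
          intro a b
          simp only [Submodule.coe_add, hadd]
          exact ψ.map_add_eq_mul _ _ }
    have hχ : χ ≠ 1 := by
      rw [AddChar.ne_one_iff]
      rw [hP] at hw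
      push_neg at hw
      obtain ⟨v0, hv0, hv0'⟩ := hw
      obtain ⟨r, hr⟩ := hψ _ hv0'
      refine ⟨⟨r • v0, V.smul_mem r hv0⟩, ?_⟩
      simpa [χ, hsmul] using hr
    exact AddChar.sum_eq_zero_of_ne_one hχ
  have step2 : ∑ v : V, ∑ w : M, ψ (B (v : M) w)
      = (Fintype.card ↥P : ℂ) * (Fintype.card ↥V : ℂ) := by
    rw [Finset.sum_comm]
    have hterm : ∀ w : M, ∑ v : V, ψ (B (v : M) w)
        = if w ∈ P then (Fintype.card ↥V : ℂ) else 0 := by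
      intro w
      by_cases hw : w ∈ P
      · rw [if_pos hw]
        have h1 : ∀ v : V, ψ (B (v : M) w) = 1 := fun v => by
          rw [(hP w).mp hw v v.2]; exact ψ.map_zero_eq_one
        rw [Finset.sum_congr rfl (fun v _ => h1 v)]
        simp
      · rw [if_neg hw]
        exact inner2 w hw
    rw [Finset.sum_congr rfl (fun w _ => hterm w), ← Finset.sum_filter,
      Finset.sum_const, nsmul_eq_mul]
    congr 2
    simp [Fintype.card_subtype]
  have hc : (Fintype.card M : ℂ) = (Fintype.card ↥P : ℂ) * (Fintype.card ↥V : ℂ) :=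
    step1.symm.trans step2
  have hn : Fintype.card M = Fintype.card ↥P * Fintype.card ↥V := by exact_mod_cast hc
  simp only [Nat.card_eq_fintype_card, hn]
  ring


end keyAux


section cards
variable {R M : Type*} [CommRing R] [AddCommGroup M] [Module R M] [Finite M]

lemma aux_card_quot (p : Submodule R M) :
    Nat.card M = Nat.card (M ⧸ p) * Nat.card ↥p :=
  AddSubgroup.card_eq_card_quotient_mul_card_addSubgroup p.toAddSubgroup

lemma aux_card_sup_mul_inf (p q : Submodule R M) :
    Nat.card ↥(p ⊔ q) * Nat.card ↥(p ⊓ q) = Nat.card ↥p * Nat.card ↥q := by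
  have e := LinearMap.quotientInfEquivSupQuotient p q
  have h1 := aux_card_quot (Submodule.comap p.subtype (p ⊓ q))
  have h2 := aux_card_quot (Submodule.comap (p ⊔ q).subtype q)
  have c1 : Nat.card ↥(Submodule.comap p.subtype (p ⊓ q)) = Nat.card ↥(p ⊓ q) :=
    Nat.card_congr (Submodule.comapSubtypeEquivOfLe inf_le_left).toEquiv
  have c2 : Nat.card ↥(Submodule.comap (p ⊔ q).subtype q) = Nat.card ↥q :=
    Nat.card_congr (Submodule.comapSubtypeEquivOfLe le_sup_right).toEquiv
  have cq : Nat.card (↥p ⧸ Submodule.comap p.subtype (p ⊓ q))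
      = Nat.card (↥(p ⊔ q) ⧸ Submodule.comap (p ⊔ q).subtype q) :=
    Nat.card_congr e.toEquiv
  rw [c1] at h1
  rw [c2] at h2
  rw [h1, h2, ← cq]
  ring
end cards

section cards2
variable {R : Type*} [CommRing R] [Finite R]

lemma aux_card_free [Nontrivial R] {k : ℕ} (V : Submodule R (Fin k → R)) [Module.Free R ↥V] :
    Nat.card ↥V = Nat.card R ^ (Module.finrank R ↥V) := by
  have hfin : Module.Finite R ↥V := Module.Finite.of_finite
  let b := Module.Free.chooseBasis R ↥V
  rw [Nat.card_congr b.equivFun.toEquiv, Nat.card_pi, Finset.prod_const, Finset.card_univ,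
    Module.finrank_eq_card_chooseBasisIndex]

lemma aux_card_matColIn (n m : ℕ) (V : Submodule R (Fin n → R)) :
    Nat.card ↥(matColIn n m V) = Nat.card ↥V ^ m := by
  have e : ↥(matColIn n m V) ≃ (Fin m → ↥V) :=
    { toFun := fun X j => ⟨(X : Matrix (Fin n) (Fin m) R)ᵀ j, X.2 j⟩
      invFun := fun f => ⟨Matrix.of fun i j => (f j : Fin n → R) i, fun j => by
        convert (f j).2 using 1; rfl⟩
      left_inv := fun X => by
        ext i j
        rfl
      right_inv := fun f => by
        ext j i
        rfl }
  rw [Nat.card_congr e, Nat.card_pi, Finset.prod_const, Finset.card_univ, Fintype.card_fin]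

lemma aux_card_matrix (n m : ℕ) :
    Nat.card (Matrix (Fin n) (Fin m) R) = Nat.card R ^ (n * m) := by
  have e : Matrix (Fin n) (Fin m) R ≃ (Fin n → Fin m → R) := Equiv.refl _
  rw [Nat.card_congr e, Nat.card_pi]
  simp only [Nat.card_pi, Finset.prod_const, Finset.card_univ, Fintype.card_fin]
  rw [← pow_mul, Nat.mul_comm]

lemma aux_trace_eq {n m : ℕ} (X Y : Matrix (Fin n) (Fin m) R) :
    Matrix.trace (X * Yᵀ) = ∑ j : Fin m, (Xᵀ j) ⬝ᵥ (Yᵀ j) := by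
  rw [Matrix.trace]
  simp only [Matrix.diag, Matrix.mul_apply, Matrix.transpose_apply, dotProduct]
  rw [Finset.sum_comm]


lemma aux_mem_dual_matColIn {n m : ℕ} (U : Submodule R (Fin n → R))
    (Y : Matrix (Fin n) (Fin m) R) :
    Y ∈ matColIn n m (perp U) ↔ ∀ X ∈ matColIn n m U, Matrix.trace (X * Yᵀ) = 0 := by
  constructor
  · intro hY X hX
    rw [aux_trace_eq]
    refine Finset.sum_eq_zero fun j _ => ?_
    exact hY j (Xᵀ j) (hX j)
  · intro h j u hu
    have hX : (Matrix.of fun i j' => if j' = j then u i else 0) ∈ matColIn n m U := by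
      intro j'
      by_cases hj : j' = j
      · subst hj
        convert hu using 1
        funext i
        simp
      · convert U.zero_mem using 1
        funext i
        simp [hj]
    have h2 := h _ hX
    rw [aux_trace_eq] at h2
    simp only [Matrix.transpose_apply, Matrix.of_apply, dotProduct, ite_mul, zero_mul] at h2
    rw [Finset.sum_comm] at h2
    simpa [Finset.sum_ite_eq, dotProduct] using h2

lemma aux_mem_inf_sup {n m : ℕ} (C : Submodule R (Matrix (Fin n) (Fin m) R))
    (U : Submodule R (Fin n → R)) (Y : Matrix (Fin n) (Fin m) R) :
    Y ∈ dualCode C ⊓ matColIn n m (perp U) ↔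
      ∀ X ∈ C ⊔ matColIn n m U, Matrix.trace (X * Yᵀ) = 0 := by
  constructor
  · rintro ⟨h1, h2⟩ X hX
    obtain ⟨a, ha, b, hb, rfl⟩ := Submodule.mem_sup.mp hX
    rw [Matrix.add_mul, Matrix.trace_add, h1 a ha,
      (aux_mem_dual_matColIn U Y).mp h2 b hb, add_zero]
  · intro h
    exact ⟨fun X hX => h X (Submodule.mem_sup_left hX),
      (aux_mem_dual_matColIn U Y).mpr fun X hX => h X (Submodule.mem_sup_right hX)⟩

end cards2

/-- Let `R` be a finite chain ring, `C ⊆ M_{n,m}(R)` a code (a free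
`R`-submodule), and `U ⊆ R^n` a free `R`-submodule of rank `n − u`. Then
`|C ∩ Mat_U(n×m, R)| · |R|^{m·u} = |C| · |C^⊥ ∩ Mat_{U^⊥}(n×m, R)|`. -/
theorem card_inter_matColIn_mul
    {R : Type*} [CommRing R] [Finite R] [IsLocalRing R]
    (hchain : (IsLocalRing.maximalIdeal R).IsPrincipal)
    (n m : ℕ) (hn : 1 ≤ n) (hm : 1 ≤ m)
    (C : Submodule R (Matrix (Fin n) (Fin m) R)) [Module.Free R ↥C]
    (U : Submodule R (Fin n → R)) [Module.Free R ↥U]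
    (u : ℕ) (hun : u ≤ n) (hU : Module.finrank R ↥U = n - u) :
    Nat.card ↥(C ⊓ matColIn n m U) * Nat.card R ^ (m * u)
      = Nat.card ↥C * Nat.card ↥(dualCode C ⊓ matColIn n m (perp U)) := by
  classical
  obtain ⟨π, hspan⟩ := hchain
  have hπmem : π ∈ IsLocalRing.maximalIdeal R := by
    rw [hspan]
    exact Ideal.subset_span (Set.mem_singleton π)
  obtain ⟨N, hN⟩ := aux_pi_nilpotent hπmem
  have hex : ∃ e, π ^ e = 0 := ⟨N, hN⟩
  set e := Nat.find hex with he
  have hee : π ^ e = 0 := Nat.find_spec hex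
  have he1 : 1 ≤ e := by
    by_contra h0
    have h1 := hee
    rw [show e = 0 by omega, pow_zero] at h1
    exact one_ne_zero h1
  have hemin : ∀ i < e, π ^ i ≠ 0 := by
    intro i hi hzero
    have hle : e ≤ i := Nat.find_le hzero
    omega
  have hne : π ^ (e - 1) ≠ 0 := hemin (e - 1) (by omega)
  obtain ⟨ψ, hψ0⟩ := (AddChar.exists_apply_ne_zero (a := π ^ (e - 1))).mpr hne
  have hgen : ∀ x : R, x ≠ 0 → ∃ r : R, ψ (r * x) ≠ 1 := by
    intro x hx
    obtain ⟨y, hy⟩ := aux_exists_mul hspan hee hemin hx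
    exact ⟨y, by rwa [mul_comm, hy]⟩
  set B : Matrix (Fin n) (Fin m) R → Matrix (Fin n) (Fin m) R → R :=
    fun X Y => Matrix.trace (X * Yᵀ) with hBdef
  have hadd : ∀ x y z : Matrix (Fin n) (Fin m) R, B (x + y) z = B x z + B y z := by
    intro x y z
    simp [hBdef, Matrix.add_mul]
  have hadd' : ∀ x y z : Matrix (Fin n) (Fin m) R, B x (y + z) = B x y + B x z := by
    intro x y z
    simp [hBdef, Matrix.transpose_add, Matrix.mul_add]
  have hsmul : ∀ (r : R) (x y : Matrix (Fin n) (Fin m) R), B (r • x) y = r * B x y := by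
    intro r x y
    simp [hBdef, Matrix.smul_mul, smul_eq_mul]
  have hsmul' : ∀ (r : R) (x y : Matrix (Fin n) (Fin m) R), B x (r • y) = r * B x y := by
    intro r x y
    simp [hBdef, Matrix.transpose_smul, Matrix.mul_smul, smul_eq_mul]
  have hnd : ∀ x : Matrix (Fin n) (Fin m) R, x ≠ 0 → ∃ y, B x y ≠ 0 := by
    intro X hX
    have hij : ∃ i j, X i j ≠ 0 := by
      by_contra h
      push_neg at h
      exact hX (by ext i j; simp [h])
    obtain ⟨i, j, hij⟩ := hij
    refine ⟨Matrix.of fun a b => if a = i ∧ b = j then (1 : R) else 0, ?_⟩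
    have hcalc : Matrix.trace (X * (Matrix.of fun a b => if a = i ∧ b = j then (1 : R) else 0)ᵀ)
        = X i j := by
      rw [aux_trace_eq]
      simp only [dotProduct, Matrix.transpose_apply, Matrix.of_apply]
      have inner : ∀ j' : Fin m,
          (∑ i' : Fin n, X i' j' * (if i' = i ∧ j' = j then (1 : R) else 0))
            = if j' = j then X i j' else 0 := by
        intro j'
        by_cases hj : j' = j
        · subst hj
          simp [mul_ite, mul_one, mul_zero, Finset.sum_ite_eq']
        · simp [hj]
      rw [Finset.sum_congr rfl fun j' _ => inner j']
      simp
    intro hc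
    exact hij (by rw [← hcalc]; exact hc)
  have K1 := aux_key_card ψ hgen B hadd hadd' hsmul hsmul' hnd
    (C ⊔ matColIn n m U) (dualCode C ⊓ matColIn n m (perp U))
    (fun w => aux_mem_inf_sup C U w)
  have K2 := aux_key_card ψ hgen B hadd hadd' hsmul hsmul' hnd
    (matColIn n m U) (matColIn n m (perp U))
    (fun w => aux_mem_dual_matColIn U w)
  have hsupinf := aux_card_sup_mul_inf C (matColIn n m U)
  have hMat : Nat.card (Matrix (Fin n) (Fin m) R) = Nat.card R ^ (n * m) :=
    aux_card_matrix n m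
  have hRpos : 0 < Nat.card R := Nat.card_pos
  have hW : Nat.card ↥(matColIn n m U) = Nat.card R ^ ((n - u) * m) := by
    rw [aux_card_matColIn n m U, aux_card_free U, hU, ← pow_mul]
  have hp : Nat.card ↥(matColIn n m (perp U)) = Nat.card R ^ (m * u) := by
    have harith : (n - u) * m + m * u = n * m := by
      have : n - u + u = n := by omega
      calc (n - u) * m + m * u = ((n - u) + u) * m := by ring
      _ = n * m := by rw [this]
    have h2 : Nat.card R ^ ((n - u) * m) * Nat.card ↥(matColIn n m (perp U))
        = Nat.card R ^ ((n - u) * m) * Nat.card R ^ (m * u) := by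
      rw [← pow_add, harith, ← hMat, ← K2, hW]
    exact Nat.eq_of_mul_eq_mul_left (Nat.pow_pos hRpos) h2
  -- abbreviations
  haveI : Nonempty ↥(matColIn n m U) := ⟨0⟩
  haveI : Nonempty ↥(C ⊔ matColIn n m U) := ⟨0⟩
  have hwpos : 0 < Nat.card ↥(matColIn n m U) := Nat.card_pos
  have hspos : 0 < Nat.card ↥(C ⊔ matColIn n m U) := Nat.card_pos
  have H : (Nat.card ↥(C ⊓ matColIn n m U) * Nat.card R ^ (m * u))
        * (Nat.card ↥(matColIn n m U) * Nat.card ↥(C ⊔ matColIn n m U))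
      = (Nat.card ↥C * Nat.card ↥(dualCode C ⊓ matColIn n m (perp U)))
        * (Nat.card ↥(matColIn n m U) * Nat.card ↥(C ⊔ matColIn n m U)) := by
    rw [← hp]
    calc (Nat.card ↥(C ⊓ matColIn n m U) * Nat.card ↥(matColIn n m (perp U)))
        * (Nat.card ↥(matColIn n m U) * Nat.card ↥(C ⊔ matColIn n m U))
        = (Nat.card ↥(matColIn n m U) * Nat.card ↥(matColIn n m (perp U)))
          * (Nat.card ↥(C ⊔ matColIn n m U) * Nat.card ↥(C ⊓ matColIn n m U)) := by ring
    _ = Nat.card (Matrix (Fin n) (Fin m) R) * (Nat.card ↥C * Nat.card ↥(matColIn n m U)) := by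
        rw [K2, hsupinf]
    _ = (Nat.card ↥(C ⊔ matColIn n m U) * Nat.card ↥(dualCode C ⊓ matColIn n m (perp U)))
          * (Nat.card ↥C * Nat.card ↥(matColIn n m U)) := by rw [K1]
    _ = (Nat.card ↥C * Nat.card ↥(dualCode C ⊓ matColIn n m (perp U)))
        * (Nat.card ↥(matColIn n m U) * Nat.card ↥(C ⊔ matColIn n m U)) := by ring
  exact Nat.eq_of_mul_eq_mul_right (Nat.mul_pos hwpos hspos) H
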